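/- arXiv:cs/0509100 — 3 statements merged into one kernel-verified Lean document; each statement's English description precedes it below -/
import Mathlib

section
/- There exists a finite simple bipartite graph of maximum degree at most 3, of girth 6, with two designated distinct edges e (the input edge) and e' (an output edge), such that (i) in every distance-2 edge coloring of the graph with 5 colors, the edges e and e' receive the same color, and (ii) for each of the 5 colors there is a distance-2 edge coloring with 5 colors assigning that color to e. (This is the defining property of the fanout gadget.) -/
open SimpleGraph

/-- Two edges `e` and `f` of a simple graph `G` are within distance 2 of each other:
they are distinct edges of `G` and either they are adjacent (share an endpoint) or
there is some other edge of `G` adjacent to both of them. -/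
def WithinDist2 {V : Type*} (G : SimpleGraph V) (e f : Sym2 V) : Prop :=
  e ∈ G.edgeSet ∧ f ∈ G.edgeSet ∧ e ≠ f ∧
    ((∃ v, v ∈ e ∧ v ∈ f) ∨
      ∃ g ∈ G.edgeSet, g ≠ e ∧ g ≠ f ∧ (∃ v, v ∈ e ∧ v ∈ g) ∧ (∃ v, v ∈ g ∧ v ∈ f))

/-- A distance-2 edge coloring (strong edge coloring) of `G` with `k` colors:
any two distinct edges within distance 2 of each other receive distinct colors. -/
def IsD2EdgeColoring {V : Type*} (G : SimpleGraph V) (k : ℕ) (c : Sym2 V → Fin k) : Prop :=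
  ∀ e f : Sym2 V, WithinDist2 G e f → c e ≠ c f

/-!
The gadget is the Desargues graph: the 2- and 3-element subsets of `Fin 5`, with `A ~ B` iff
`A ⊂ B`. It is bipartite by cardinality, and two distinct 2-sets (3-sets) have at most one common
neighbour, their union (intersection), so it has no 4-cycles and its girth is 6. Colouring the edge
`A ⊂ B` by the point of `B \ A` is a distance-2 colouring with 5 colours, and permuting the colours
puts any colour on the input edge.

Conversely, in a distance-2 colouring with 5 colours of a graph of minimum degree 3, an edge and
the four edges meeting it use every colour. Comparing this at two opposite vertices of a hexagon
forces opposite edges of the hexagon to share their colour, and two hexagons connect the input edge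
`{0, 1} ⊂ {0, 1, 2}` to its complement `{3, 4} ⊂ {2, 3, 4}`.
-/

section General

variable {V : Type*} {G : SimpleGraph V}

theorem withinDist2_of_adj_of_adj {u v w : V} (huv : G.Adj u v) (huw : G.Adj u w) (hvw : v ≠ w) :
    WithinDist2 G s(u, v) s(u, w) :=
  ⟨huv, huw, by simp [hvw, huv.ne.symm], Or.inl ⟨u, by simp, by simp⟩⟩

theorem withinDist2_of_path {u v w x : V} (huv : G.Adj u v) (hvw : G.Adj v w) (hwx : G.Adj w x)
    (huw : u ≠ w) (hvx : v ≠ x) : WithinDist2 G s(u, v) s(w, x) :=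
  ⟨huv, hwx, by simp [huw, hvw.ne], Or.inr ⟨s(v, w), hvw, by simp [huw.symm, hvw.ne.symm],
    by simp [hvx, hvw.ne],
    ⟨v, by simp, by simp⟩, ⟨w, by simp, by simp⟩⟩⟩

theorem isD2EdgeColoring_of_proper_of_join {k : ℕ} {c : Sym2 V → Fin k}
    (hproper : ∀ ⦃u v v'⦄, G.Adj u v → G.Adj u v' → c s(u, v) = c s(u, v') → v = v')
    (hjoin : ∀ ⦃u w v v'⦄, G.Adj u w → G.Adj u v → G.Adj w v' → c s(u, v) = c s(w, v') →
      c s(u, w) = c s(u, v)) :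
    IsD2EdgeColoring G k c := by
  rintro e f ⟨he, hf, hef, hnear⟩ hcol
  have shared : ∀ u, u ∈ e → u ∈ f → False := by
    intro u hue huf
    obtain ⟨a, rfl⟩ := Sym2.mem_iff_exists.mp hue
    obtain ⟨b, rfl⟩ := Sym2.mem_iff_exists.mp huf
    obtain rfl := hproper (G.mem_edgeSet.mp he) (G.mem_edgeSet.mp hf) hcol
    exact hef rfl
  rcases hnear with ⟨u, hue, huf⟩ | ⟨g, hg, hge, -, ⟨u, hue, hug⟩, ⟨w, hwg, hwf⟩⟩
  · exact shared u hue huf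
  by_cases huw : u = w
  · exact shared u hue (huw ▸ hwf)
  obtain rfl := (Sym2.mem_and_mem_iff huw).mp ⟨hug, hwg⟩
  obtain ⟨a, rfl⟩ := Sym2.mem_iff_exists.mp hue
  obtain ⟨b, rfl⟩ := Sym2.mem_iff_exists.mp hwf
  rw [mem_edgeSet] at hg he hf
  obtain rfl := hproper hg he (hjoin hg he hf hcol)
  exact hge rfl

theorem IsD2EdgeColoring.comp_injective {k l : ℕ} {c : Sym2 V → Fin k}
    (hc : IsD2EdgeColoring G k c) {σ : Fin k → Fin l} (hσ : Function.Injective σ) :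
    IsD2EdgeColoring G l (σ ∘ c) :=
  fun e f hef => hσ.ne (hc e f hef)

theorem SimpleGraph.exists_adj_ne_ne_of_three_le_degree {x : V}
    [Fintype (G.neighborSet x)] (h : 3 ≤ G.degree x) (a b : V) :
    ∃ w, G.Adj x w ∧ w ≠ a ∧ w ≠ b := by
  classical
  obtain ⟨w, hw, hwab⟩ := Finset.exists_mem_notMem_of_card_lt_card
    ((Finset.card_le_two (a := a) (b := b)).trans_lt h)
  simp only [Finset.mem_insert, Finset.mem_singleton, not_or] at hwab
  exact ⟨w, (G.mem_neighborFinset x w).mp hw, hwab⟩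

theorem Fin.eq_or_eq_of_nodup_five {a b c d e x : Fin 5} (h : [a, b, c, d, e].Nodup)
    (hx : x ∉ [a, b, c]) : x = d ∨ x = e := by
  by_contra! hde
  have := (List.nodup_cons.mpr ⟨by simp_all, h⟩ : [x, a, b, c, d, e].Nodup).length_le_card
  simp at this

namespace IsD2EdgeColoring

variable {c : Sym2 V → Fin 5} (hc : IsD2EdgeColoring G 5 c)
include hc

theorem apply_ne_of_adj {u v w : V} (huv : G.Adj u v) (huw : G.Adj u w) (hvw : v ≠ w) :
    c s(u, v) ≠ c s(u, w) :=
  hc _ _ (withinDist2_of_adj_of_adj huv huw hvw)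

theorem apply_ne_of_path {u v w x : V} (huv : G.Adj u v) (hvw : G.Adj v w) (hwx : G.Adj w x)
    (huw : u ≠ w) (hvx : v ≠ x) : c s(u, v) ≠ c s(w, x) :=
  hc _ _ (withinDist2_of_path huv hvw hwx huw hvx)

/-- The two colours at `p` away from `m` are the two colours missing at `m`, so any edge at another
neighbour `q` of `m`, pointing away from `m`, carries one of them. -/
theorem apply_eq_or_apply_eq {m p q r p₁ p₂ q₁ : V} (hmp : G.Adj m p) (hmq : G.Adj m q)
    (hmr : G.Adj m r) (hpq : p ≠ q) (hpr : p ≠ r) (hqr : q ≠ r) (hpp₁ : G.Adj p p₁)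
    (hpp₂ : G.Adj p p₂) (hp₁₂ : p₁ ≠ p₂) (hp₁m : p₁ ≠ m) (hp₂m : p₂ ≠ m) (hqq₁ : G.Adj q q₁)
    (hq₁m : q₁ ≠ m) : c s(q, q₁) = c s(p, p₁) ∨ c s(q, q₁) = c s(p, p₂) := by
  have hpm : c s(m, p) = c s(p, m) := congrArg c Sym2.eq_swap
  have hqm : c s(m, q) = c s(q, m) := congrArg c Sym2.eq_swap
  have hrm : c s(m, r) = c s(r, m) := congrArg c Sym2.eq_swap
  refine Fin.eq_or_eq_of_nodup_five (a := c s(m, p)) (b := c s(m, q)) (c := c s(m, r)) ?_ ?_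
  · simp only [List.nodup_cons, List.mem_cons, List.not_mem_nil, or_false, not_or,
      List.nodup_nil, not_false_eq_true, and_true]
    refine ⟨⟨hc.apply_ne_of_adj hmp hmq hpq, hc.apply_ne_of_adj hmp hmr hpr,
      hpm ▸ hc.apply_ne_of_adj hmp.symm hpp₁ hp₁m.symm,
      hpm ▸ hc.apply_ne_of_adj hmp.symm hpp₂ hp₂m.symm⟩,
      ⟨hc.apply_ne_of_adj hmq hmr hqr,
        hqm ▸ hc.apply_ne_of_path hmq.symm hmp hpp₁ hpq.symm hp₁m.symm,
        hqm ▸ hc.apply_ne_of_path hmq.symm hmp hpp₂ hpq.symm hp₂m.symm⟩,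
      ⟨hrm ▸ hc.apply_ne_of_path hmr.symm hmp hpp₁ hpr.symm hp₁m.symm,
        hrm ▸ hc.apply_ne_of_path hmr.symm hmp hpp₂ hpr.symm hp₂m.symm⟩,
      hc.apply_ne_of_adj hpp₁ hpp₂ hp₁₂⟩
  · have hq₁q : c s(q, q₁) = c s(q₁, q) := congrArg c Sym2.eq_swap
    simp only [List.mem_cons, List.not_mem_nil, or_false, not_or]
    exact ⟨hq₁q ▸ hc.apply_ne_of_path hqq₁.symm hmq.symm hmp hq₁m hpq.symm,
      hqm ▸ hc.apply_ne_of_adj hqq₁ hmq.symm hq₁m,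
      hq₁q ▸ hc.apply_ne_of_path hqq₁.symm hmq.symm hmr hq₁m hqr⟩

theorem apply_eq_of_hexagon [G.LocallyFinite] (hdeg : ∀ x, 3 ≤ G.degree x) {v : Fin 6 → V}
    (hv : Function.Injective v) (hadj : ∀ i, G.Adj (v i) (v (i + 1))) :
    c s(v 0, v 1) = c s(v 3, v 4) := by
  have hne : ∀ {i j : Fin 6}, i ≠ j → v i ≠ v j := hv.ne
  have h01 : G.Adj (v 0) (v 1) := hadj 0
  have h12 : G.Adj (v 1) (v 2) := hadj 1
  have h23 : G.Adj (v 2) (v 3) := hadj 2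
  have h34 : G.Adj (v 3) (v 4) := hadj 3
  have h45 : G.Adj (v 4) (v 5) := hadj 4
  have h50 : G.Adj (v 5) (v 0) := hadj 5
  obtain ⟨w₂, h₂, h₂₁, h₂₃⟩ := exists_adj_ne_ne_of_three_le_degree (hdeg (v 2)) (v 1) (v 3)
  obtain ⟨w₃, h₃, h₃₂, h₃₄⟩ := exists_adj_ne_ne_of_three_le_degree (hdeg (v 3)) (v 2) (v 4)
  obtain ⟨w₄, h₄, h₄₃, h₄₅⟩ := exists_adj_ne_ne_of_three_le_degree (hdeg (v 4)) (v 3) (v 5)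
  obtain ⟨w₅, h₅, h₅₄, h₅₀⟩ := exists_adj_ne_ne_of_three_le_degree (hdeg (v 5)) (v 4) (v 0)
  -- `s(v 0, v 1)` has the colour of `s(v 3, v 4)` or of the third edge at `v 3`, and likewise
  -- with `v 4`; the two third edges are within distance 2 of each other.
  have near₂ := hc.apply_eq_or_apply_eq h23 h12.symm h₂ (hne (by decide)) h₂₃.symm h₂₁.symm h34
    h₃ h₃₄.symm (hne (by decide)) h₃₂ h01.symm (hne (by decide))
  have near₅ := hc.apply_eq_or_apply_eq h45.symm h50 h₅ (hne (by decide)) h₅₄.symm h₅₀.symm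
    h34.symm h₄ h₄₃.symm (hne (by decide)) h₄₅ h01 (hne (by decide))
  rw [Sym2.eq_swap (a := v 1)] at near₂
  rw [Sym2.eq_swap (a := v 4)] at near₅
  rcases near₂ with h | h₃'
  · exact h
  rcases near₅ with h | h₄'
  · exact h
  have := hc.apply_ne_of_path h₃.symm h34 h₄ h₃₄ h₄₃.symm
  rw [Sym2.eq_swap (a := w₃)] at this
  exact absurd (h₃'.symm.trans h₄') this

end IsD2EdgeColoring

theorem SimpleGraph.Walk.IsCycle.length_ne_four {u : V} {p : G.Walk u u} (hp : p.IsCycle)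
    (h : ∀ x y, x ≠ y → (G.commonNeighbors x y).Subsingleton) : p.length ≠ 4 := by
  intro h4
  have hinj := hp.getVert_injOn
  have h13 : p.getVert 1 ≠ p.getVert 3 := fun e => by
    have := hinj (by simp [h4]) (by simp [h4]) e; omega
  have h24 : p.getVert 2 ≠ p.getVert 4 := fun e => by
    have := hinj (by simp [h4]) (by simp [h4]) e; omega
  have hadj : ∀ i < 4, G.Adj (p.getVert i) (p.getVert (i + 1)) := fun i hi =>
    p.adj_getVert_succ (h4 ▸ hi)
  have h04 : p.getVert 0 = p.getVert 4 := by rw [← h4, p.getVert_zero, p.getVert_length]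
  have h2 : p.getVert 2 ∈ G.commonNeighbors (p.getVert 1) (p.getVert 3) :=
    ⟨hadj 1 (by omega), (hadj 2 (by omega)).symm⟩
  have h4' : p.getVert 4 ∈ G.commonNeighbors (p.getVert 1) (p.getVert 3) :=
    ⟨h04 ▸ (hadj 0 (by omega)).symm, hadj 3 (by omega)⟩
  exact h24 (h _ _ h13 h2 h4')

theorem SimpleGraph.egirth_eq_six_of_hexagon (b : G.Coloring Bool)
    (h : ∀ x y, x ≠ y → (G.commonNeighbors x y).Subsingleton) {v : Fin 6 → V}
    (hv : Function.Injective v) (hadj : ∀ i, G.Adj (v i) (v (i + 1))) : G.egirth = 6 := by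
  refine le_antisymm ?_ (le_egirth.mpr fun a w hw => ?_)
  · let w : G.Walk (v 0) (v 0) := .cons (hadj 0) (.cons (hadj 1) (.cons (hadj 2)
      (.cons (hadj 3) (.cons (hadj 4) (.cons (hadj 5) .nil)))))
    have hw : w.IsCycle := by
      refine (Walk.cons_isCycle_iff _ _).mpr ⟨(Walk.isPath_def _).mpr ?_, ?_⟩
      · exact (show [(1 : Fin 6), 2, 3, 4, 5, 0].Nodup by decide).map hv
      · simp [hv.eq_iff]
    exact egirth_le_length hw
  · have heven := (b.even_length_iff_congr w).mpr Iff.rfl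
    have h3 := hw.three_le_length
    have h4 := hw.length_ne_four h
    obtain ⟨k, hk⟩ := heven
    exact_mod_cast (by omega : 6 ≤ w.length)

end General

theorem Finset.eq_union_of_subset_of_subset {α : Type*} [DecidableEq α] {s t u : Finset α}
    (hs : s ⊆ u) (ht : t ⊆ u) (hst : s ≠ t) (hcard : s.card = t.card)
    (hu : u.card = s.card + 1) : u = s ∪ t := by
  refine (Finset.eq_of_subset_of_card_le (Finset.union_subset hs ht) ?_).symm
  have : s ⊂ s ∪ t := Finset.ssubset_iff_subset_ne.mpr ⟨Finset.subset_union_left, fun h =>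
    hst (Finset.eq_of_subset_of_card_le (h ▸ Finset.subset_union_right) hcard.le).symm⟩
  have := Finset.card_lt_card this
  omega

theorem Finset.eq_inter_of_subset_of_subset {α : Type*} [DecidableEq α] {s t u : Finset α}
    (hs : u ⊆ s) (ht : u ⊆ t) (hst : s ≠ t) (hcard : s.card = t.card)
    (hu : s.card = u.card + 1) : u = s ∩ t := by
  refine Finset.eq_of_subset_of_card_le (Finset.subset_inter hs ht) ?_
  have : s ∩ t ⊂ s := Finset.ssubset_iff_subset_ne.mpr ⟨Finset.inter_subset_left, fun h =>
    hst (Finset.eq_of_subset_of_card_le (h ▸ Finset.inter_subset_right) hcard.ge)⟩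
  have := Finset.card_lt_card this
  omega

abbrev DesarguesVertex := {s : Finset (Fin 5) // s.card = 2 ∨ s.card = 3}

def desarguesGraph : SimpleGraph DesarguesVertex where
  Adj s t := s.1 ⊂ t.1 ∨ t.1 ⊂ s.1
  symm := ⟨fun _ _ => Or.symm⟩
  loopless := ⟨fun _ h => by simp at h⟩

instance : DecidableRel desarguesGraph.Adj := fun s t =>
  inferInstanceAs (Decidable (s.1 ⊂ t.1 ∨ t.1 ⊂ s.1))

namespace desarguesGraph

theorem degree_eq_three : ∀ v, desarguesGraph.degree v = 3 := by decide

theorem card_ne_of_adj {s t : DesarguesVertex} (h : desarguesGraph.Adj s t) : s.1.card ≠ t.1.card :=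
  h.elim (fun h => (Finset.card_lt_card h).ne) fun h => (Finset.card_lt_card h).ne'

theorem ssubset_of_adj_of_card_eq_two {s t : DesarguesVertex} (h : desarguesGraph.Adj s t)
    (hs : s.1.card = 2) : s.1 ⊂ t.1 :=
  h.resolve_right fun hts => by have := Finset.card_lt_card hts; have := t.2; omega

theorem ssubset_of_adj_of_card_eq_three {s t : DesarguesVertex} (h : desarguesGraph.Adj s t)
    (hs : s.1.card = 3) : t.1 ⊂ s.1 :=
  h.resolve_left fun hst => by have := Finset.card_lt_card hst; have := t.2; omega

theorem commonNeighbors_subsingleton {u w : DesarguesVertex} (huw : u ≠ w) :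
    (desarguesGraph.commonNeighbors u w).Subsingleton := by
  have huw' : u.1 ≠ w.1 := Subtype.coe_injective.ne huw
  suffices key : ∀ x ∈ desarguesGraph.commonNeighbors u w,
      x.1 = if u.1.card = 2 then u.1 ∪ w.1 else u.1 ∩ w.1 from
    fun x hx y hy => Subtype.ext ((key x hx).trans (key y hy).symm)
  intro x hx
  obtain ⟨hux, hwx⟩ := hx
  rcases u.2 with hu | hu
  · have hux' := ssubset_of_adj_of_card_eq_two hux hu
    have hx : x.1.card = 3 := by have := Finset.card_lt_card hux'; have := x.2; omega
    have hwx' := ssubset_of_adj_of_card_eq_three hwx.symm hx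
    have hw : w.1.card = 2 := by have := Finset.card_lt_card hwx'; have := w.2; omega
    rw [if_pos hu]
    exact Finset.eq_union_of_subset_of_subset hux'.subset hwx'.subset huw' (hu.trans hw.symm)
      (by omega)
  · have hxu := ssubset_of_adj_of_card_eq_three hux hu
    have hx : x.1.card = 2 := by have := Finset.card_lt_card hxu; have := x.2; omega
    have hxw := ssubset_of_adj_of_card_eq_two hwx.symm hx
    have hw : w.1.card = 3 := by have := Finset.card_lt_card hxw; have := w.2; omega
    rw [if_neg (by omega)]
    exact Finset.eq_inter_of_subset_of_subset hxu.subset hxw.subset huw' (hu.trans hw.symm)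
      (by omega)

def bicoloring : desarguesGraph.Coloring Bool :=
  Coloring.mk (fun s => decide (s.1.card = 2)) fun {s t} h => by
    have := card_ne_of_adj h
    rcases s.2 with hs | hs <;> rcases t.2 with ht | ht <;> simp_all

/-- On an edge `A ⊂ B` the symmetric difference is a single point, the colour of the edge; summing
over it is a symmetric way to name that point. -/
def edgeColoring : Sym2 DesarguesVertex → Fin 5 :=
  Sym2.lift ⟨fun s t => ∑ x ∈ symmDiff s.1 t.1, x, fun s t => by dsimp only; rw [symmDiff_comm]⟩

theorem symmDiff_eq_singleton {s t : DesarguesVertex} (h : desarguesGraph.Adj s t) :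
    symmDiff s.1 t.1 = {edgeColoring s(s, t)} := by
  have hcard : (symmDiff s.1 t.1).card = 1 := by
    have := s.2; have := t.2
    rcases h with h | h
    · rw [symmDiff_of_le h.le, Finset.card_sdiff_of_subset h.le]
      have := Finset.card_lt_card h; omega
    · rw [symmDiff_of_ge h.le, Finset.card_sdiff_of_subset h.le]
      have := Finset.card_lt_card h; omega
  obtain ⟨x, hx⟩ := Finset.card_eq_one.mp hcard
  simp [edgeColoring, hx]

theorem edgeColoring_mem_iff {s t : DesarguesVertex} (h : desarguesGraph.Adj s t) :
    edgeColoring s(s, t) ∈ s.1 ↔ s.1.card = 3 := by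
  have hx := Finset.mem_symmDiff.mp ((symmDiff_eq_singleton h).symm ▸ Finset.mem_singleton_self _)
  rcases s.2 with hs | hs
  · have hst := (ssubset_of_adj_of_card_eq_two h hs).subset
    exact iff_of_false (fun hxs => hx.elim (fun h => h.2 (hst hxs)) fun h => h.2 hxs) (by omega)
  · have hts := (ssubset_of_adj_of_card_eq_three h hs).subset
    exact iff_of_true (hx.elim And.left fun h => hts h.1) hs

theorem eq_symmDiff_edgeColoring {s t : DesarguesVertex} (h : desarguesGraph.Adj s t) :
    t.1 = symmDiff s.1 {edgeColoring s(s, t)} := by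
  rw [← symmDiff_eq_singleton h, symmDiff_symmDiff_cancel_left]

theorem isD2EdgeColoring_edgeColoring : IsD2EdgeColoring desarguesGraph 5 edgeColoring := by
  refine isD2EdgeColoring_of_proper_of_join (fun u v v' huv huv' hc => ?_)
    fun u w v v' huw huv hwv' hc => ?_
  · exact Subtype.ext (by rw [eq_symmDiff_edgeColoring huv, eq_symmDiff_edgeColoring huv', hc])
  · have hu := edgeColoring_mem_iff huv
    have hw := hc ▸ edgeColoring_mem_iff hwv'
    have hcard := card_ne_of_adj huw
    have hmem : edgeColoring s(u, v) ∈ symmDiff u.1 w.1 := by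
      rw [Finset.mem_symmDiff]
      rcases u.2 with h | h <;> rcases w.2 with h' | h' <;> simp_all
    rw [symmDiff_eq_singleton huw, Finset.mem_singleton] at hmem
    exact hmem.symm

def firstHexagon : Fin 6 → DesarguesVertex :=
  ![⟨{0, 1}, by decide⟩, ⟨{0, 1, 2}, by decide⟩, ⟨{0, 2}, by decide⟩, ⟨{0, 2, 3}, by decide⟩,
    ⟨{0, 3}, by decide⟩, ⟨{0, 1, 3}, by decide⟩]

def secondHexagon : Fin 6 → DesarguesVertex :=
  ![⟨{0, 3}, by decide⟩, ⟨{0, 2, 3}, by decide⟩, ⟨{2, 3}, by decide⟩, ⟨{2, 3, 4}, by decide⟩,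
    ⟨{3, 4}, by decide⟩, ⟨{0, 3, 4}, by decide⟩]

theorem firstHexagon_injective : Function.Injective firstHexagon := by decide

theorem secondHexagon_injective : Function.Injective secondHexagon := by decide

theorem firstHexagon_adj : ∀ i, desarguesGraph.Adj (firstHexagon i) (firstHexagon (i + 1)) := by
  decide

theorem secondHexagon_adj : ∀ i, desarguesGraph.Adj (secondHexagon i) (secondHexagon (i + 1)) := by
  decide

theorem apply_eq_apply_of_isD2EdgeColoring {c : Sym2 DesarguesVertex → Fin 5}
    (hc : IsD2EdgeColoring desarguesGraph 5 c) :
    c s(firstHexagon 0, firstHexagon 1) = c s(secondHexagon 3, secondHexagon 4) := by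
  have hdeg : ∀ v, 3 ≤ desarguesGraph.degree v := fun v => (degree_eq_three v).ge
  calc c s(firstHexagon 0, firstHexagon 1)
      = c s(firstHexagon 3, firstHexagon 4) :=
        hc.apply_eq_of_hexagon hdeg firstHexagon_injective firstHexagon_adj
    _ = c s(secondHexagon 0, secondHexagon 1) := congrArg c (by decide)
    _ = c s(secondHexagon 3, secondHexagon 4) :=
        hc.apply_eq_of_hexagon hdeg secondHexagon_injective secondHexagon_adj

end desarguesGraph

/-- The fanout gadget: a finite simple bipartite graph of maximum degree at most 3 and
girth 6, with distinct designated edges `e` (input) and `e'` (output), such that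
(i) every distance-2 edge coloring with 5 colors gives `e` and `e'` the same color, and
(ii) every one of the 5 colors is realized on `e` by some such coloring. -/
theorem fanout_gadget_exists :
    ∃ (V : Type) (_ : Fintype V) (G : SimpleGraph V) (e e' : Sym2 V),
      G.Colorable 2 ∧
      (∀ v : V, (G.neighborSet v).ncard ≤ 3) ∧
      G.egirth = 6 ∧
      e ∈ G.edgeSet ∧ e' ∈ G.edgeSet ∧ e ≠ e' ∧
      (∀ c : Sym2 V → Fin 5, IsD2EdgeColoring G 5 c → c e = c e') ∧
      (∀ i : Fin 5, ∃ c : Sym2 V → Fin 5, IsD2EdgeColoring G 5 c ∧ c e = i) := by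
  open desarguesGraph in
  refine ⟨DesarguesVertex, inferInstance, desarguesGraph, s(firstHexagon 0, firstHexagon 1),
    s(secondHexagon 3, secondHexagon 4), bicoloring.colorable,
    fun v => (Set.ncard_eq_toFinset_card' _).trans_le (degree_eq_three v).le,
    egirth_eq_six_of_hexagon bicoloring (fun _ _ => commonNeighbors_subsingleton)
      firstHexagon_injective firstHexagon_adj, firstHexagon_adj 0, secondHexagon_adj 3, by decide,
    fun c hc => apply_eq_apply_of_isD2EdgeColoring hc, fun i => ?_⟩
  let σ := Equiv.swap (edgeColoring s(firstHexagon 0, firstHexagon 1)) i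
  exact ⟨σ ∘ edgeColoring, isD2EdgeColoring_edgeColoring.comp_injective σ.injective,
    Equiv.swap_apply_left _ _⟩
end

section
/- There exists a finite simple bipartite graph of maximum degree at most 3, with two designated distinct input edges and two designated distinct output edges, such that: (i) in every distance-2 edge coloring with 5 colors in which one input edge receives color T and the other receives color F (for two fixed distinct colors T and F among the 5), the two output edges receive the colors T and F in some order; and (ii) both orders occur, i.e., there is such a coloring giving the first output edge color T and the second color F, and another such coloring giving the first output edge color F and the second color T. (This is the defining property of the variable gadget.) -/
open SimpleGraph

/-! The gadget is the tree with edges `01, 12, 23, 34, 25, 56, 57`, inputs `01, 34` and outputs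
`56, 57`. The three core edges `12, 23, 25` meet at vertex `2`, and each of the four terminal
edges touches one of them and is at distance two from the other two. So in a distance-2 coloring
the core takes three colors and every terminal edge avoids them; with five colors, the inputs'
colors `T ≠ F` are the only two left, and the outputs, being adjacent, take both. Both orders are
realized by explicit colorings, transported to arbitrary `T, F` by a permutation of the colors. -/

section Decidable

variable {V : Type*} [Fintype V] [DecidableEq V] (G : SimpleGraph V) [DecidableRel G.Adj]

instance (e f : Sym2 V) : Decidable (WithinDist2 G e f) := by
  unfold WithinDist2; infer_instance

instance (k : ℕ) : DecidablePred (IsD2EdgeColoring G k) := fun _ => by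
  unfold IsD2EdgeColoring; infer_instance

end Decidable

namespace IsD2EdgeColoring

variable {V : Type*} {G : SimpleGraph V} {k : ℕ} {c : Sym2 V → Fin k}

theorem comp_injective_s4 (hc : IsD2EdgeColoring G k c) {l : ℕ} {σ : Fin k → Fin l}
    (hσ : Function.Injective σ) : IsD2EdgeColoring G l (σ ∘ c) :=
  fun e f h => hσ.ne (hc e f h)

theorem nodup_map (hc : IsD2EdgeColoring G k c) {l : List (Sym2 V)}
    (hl : l.Pairwise (WithinDist2 G)) : (l.map c).Nodup :=
  List.pairwise_map.mpr (hl.imp (hc _ _))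

end IsD2EdgeColoring

theorem List.Nodup.eq_or_eq_of_notMem {α : Type*} [Fintype α] {x₁ x₂ y : α} {l : List α}
    (hx : (x₁ :: x₂ :: l).Nodup) (hl : l.length + 2 = Fintype.card α) (hy : y ∉ l) :
    y = x₁ ∨ y = x₂ := by
  by_contra! h
  have := ((List.nodup_cons (a := y)).mpr ⟨by simp [h.1, h.2, hy], hx⟩).length_le_card
  simp only [List.length_cons] at this
  omega

theorem Equiv.Perm.exists_apply_eq_and_apply_eq {α : Type*} {a b x y : α} (hab : a ≠ b)
    (hxy : x ≠ y) : ∃ σ : Equiv.Perm α, σ a = x ∧ σ b = y := by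
  obtain ⟨σ, hσ⟩ := Equiv.Perm.exists_extending_pair _ _
    (Function.Embedding.embFinTwo hab).injective (Function.Embedding.embFinTwo hxy).injective
  exact ⟨σ, hσ 0, hσ 1⟩

namespace VariableGadget

def graph : SimpleGraph (Fin 8) :=
  fromEdgeSet
    ↑({s(0, 1), s(1, 2), s(2, 3), s(3, 4), s(2, 5), s(5, 6), s(5, 7)} : Finset (Sym2 (Fin 8)))

instance : DecidableRel graph.Adj := fun a b => by unfold graph; infer_instance

def input₁ : Sym2 (Fin 8) := s(0, 1)
def input₂ : Sym2 (Fin 8) := s(3, 4)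
def output₁ : Sym2 (Fin 8) := s(5, 6)
def output₂ : Sym2 (Fin 8) := s(5, 7)
def coreEdges : List (Sym2 (Fin 8)) := [s(1, 2), s(2, 3), s(2, 5)]

theorem pairwise_withinDist2_cons_coreEdges :
    ∀ t ∈ [input₁, input₂, output₁, output₂], (t :: coreEdges).Pairwise (WithinDist2 graph) := by
  decide

theorem withinDist2_outputs : WithinDist2 graph output₁ output₂ := by decide

theorem colorable_two : graph.Colorable 2 :=
  ⟨Coloring.mk ![0, 1, 0, 1, 0, 1, 0, 0] (by decide)⟩

theorem ncard_neighborSet_le (v : Fin 8) : (graph.neighborSet v).ncard ≤ 3 := by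
  rw [Set.ncard_eq_toFinset_card']
  revert v
  decide

theorem output_colors_eq {c : Sym2 (Fin 8) → Fin 5} (hc : IsD2EdgeColoring graph 5 c)
    (hin : c input₁ ≠ c input₂) :
    (c output₁ = c input₁ ∧ c output₂ = c input₂) ∨
      (c output₁ = c input₂ ∧ c output₂ = c input₁) := by
  have hcore : ∀ t ∈ [input₁, input₂, output₁, output₂],
      c t ∉ coreEdges.map c ∧ (coreEdges.map c).Nodup := fun t ht =>
    List.nodup_cons.mp (hc.nodup_map (pairwise_withinDist2_cons_coreEdges t ht))
  have hinputs : (c input₁ :: c input₂ :: coreEdges.map c).Nodup := by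
    simp only [List.nodup_cons, List.mem_cons, not_or]
    exact ⟨⟨hin, (hcore _ (by simp)).1⟩, (hcore _ (by simp)).1, (hcore input₁ (by simp)).2⟩
  have hlen : (coreEdges.map c).length + 2 = Fintype.card (Fin 5) := rfl
  have h₁ := hinputs.eq_or_eq_of_notMem hlen (hcore output₁ (by simp)).1
  have h₂ := hinputs.eq_or_eq_of_notMem hlen (hcore output₂ (by simp)).1
  have hout : c output₁ ≠ c output₂ := hc _ _ withinDist2_outputs
  grind

def coloring (x y : Fin 5) (e : Sym2 (Fin 8)) : Fin 5 :=
  if e = input₁ then 0 else if e = input₂ then 1 else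
  if e = s(1, 2) then 2 else if e = s(2, 3) then 3 else if e = s(2, 5) then 4 else
  if e = output₁ then x else if e = output₂ then y else 0

set_option maxRecDepth 10000 in
theorem isD2EdgeColoring_coloring {x y : Fin 5} (hxy : x ≠ y) (hx : x ≤ 1) (hy : y ≤ 1) :
    IsD2EdgeColoring graph 5 (coloring x y) := by
  revert x y
  decide

theorem exists_isD2EdgeColoring (σ : Equiv.Perm (Fin 5)) {x y : Fin 5} (hxy : x ≠ y)
    (hx : x ≤ 1) (hy : y ≤ 1) :
    ∃ c : Sym2 (Fin 8) → Fin 5, IsD2EdgeColoring graph 5 c ∧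
      c input₁ = σ 0 ∧ c input₂ = σ 1 ∧ c output₁ = σ x ∧ c output₂ = σ y :=
  ⟨σ ∘ coloring x y, (isD2EdgeColoring_coloring hxy hx hy).comp_injective_s4 σ.injective,
    by simp [coloring, input₁, input₂, output₁, output₂]⟩

end VariableGadget

open VariableGadget in
/-- The variable gadget: a finite simple bipartite graph of maximum degree at most 3 with
two distinct designated input edges `i₁, i₂` and two distinct designated output edges
`o₁, o₂` such that, for any two fixed distinct colors `T` and `F` among the 5:
(i) every distance-2 edge coloring with 5 colors giving `i₁` color `T` and `i₂` color `F`
gives the output edges the colors `T` and `F` in some order, and (ii) both orders occur. -/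
theorem variable_gadget_exists :
    ∃ (V : Type) (_ : Fintype V) (G : SimpleGraph V) (i₁ i₂ o₁ o₂ : Sym2 V),
      G.Colorable 2 ∧
      (∀ v : V, (G.neighborSet v).ncard ≤ 3) ∧
      i₁ ∈ G.edgeSet ∧ i₂ ∈ G.edgeSet ∧ o₁ ∈ G.edgeSet ∧ o₂ ∈ G.edgeSet ∧
      i₁ ≠ i₂ ∧ o₁ ≠ o₂ ∧
      ∀ T F : Fin 5, T ≠ F →
        (∀ c : Sym2 V → Fin 5, IsD2EdgeColoring G 5 c → c i₁ = T → c i₂ = F →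
            (c o₁ = T ∧ c o₂ = F) ∨ (c o₁ = F ∧ c o₂ = T)) ∧
        (∃ c : Sym2 V → Fin 5, IsD2EdgeColoring G 5 c ∧
            c i₁ = T ∧ c i₂ = F ∧ c o₁ = T ∧ c o₂ = F) ∧
        (∃ c : Sym2 V → Fin 5, IsD2EdgeColoring G 5 c ∧
            c i₁ = T ∧ c i₂ = F ∧ c o₁ = F ∧ c o₂ = T) := by
  refine ⟨Fin 8, inferInstance, graph, input₁, input₂, output₁, output₂, colorable_two,
    ncard_neighborSet_le, by decide, by decide, by decide, by decide, by decide, by decide,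
    fun T F hTF => ?_⟩
  obtain ⟨σ, rfl, rfl⟩ := Equiv.Perm.exists_apply_eq_and_apply_eq (zero_ne_one' (Fin 5)) hTF
  refine ⟨fun c hc h₁ h₂ => ?_, exists_isD2EdgeColoring σ zero_ne_one (by decide) (by decide),
    exists_isD2EdgeColoring σ one_ne_zero (by decide) (by decide)⟩
  rw [← h₁, ← h₂] at hTF ⊢
  exact output_colors_eq hc hTF
end

section
/- There exists a finite simple bipartite graph of maximum degree at most 3 with three designated pairwise distinct input edges, each incident to a degree-1 vertex and pairwise at distance greater than 2 from each other, such that for any assignment of colors a, b, c (from a palette of 5 colors) to the three input edges, the assignment extends to a distance-2 edge coloring of the whole graph with 5 colors if and only if a, b, c are not all equal. (This is the defining property of the clause gadget.) -/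
/-!
The gadget is a tree: a centre with three neighbours; the `i`-th neighbour has a pendant edge
and an edge to a vertex carrying the `i`-th input edge and a further pendant edge.

In a strong edge colouring with 5 colours, the three centre edges and the two other edges at
the `i`-th neighbour of the centre are pairwise within distance 2, so they use all 5 colours.
The `i`-th input edge is within distance 2 of all of them except the other two centre edges, so
its colour is the colour `h j` of the centre edge of some branch `j ≠ i`. Equal input colours
`a = h j` are then impossible, since the `j`-th input avoids `h j`. Conversely, when the inputs
are not all equal, distinct centre colours with this property exist; permuting the colours
we may assume they are `0, 1, 2`, and then an explicit colouring is checked by computation.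
-/

open SimpleGraph

instance {V : Type*} [Fintype V] [DecidableEq V] (G : SimpleGraph V) [DecidableRel G.Adj]
    (e f : Sym2 V) : Decidable (WithinDist2 G e f) := by
  unfold WithinDist2; infer_instance

theorem SimpleGraph.ncard_neighborSet_eq_degree {V : Type*} (G : SimpleGraph V) (v : V)
    [Fintype (G.neighborSet v)] : (G.neighborSet v).ncard = G.degree v := by
  rw [Set.ncard_eq_toFinset_card', ← neighborFinset_def, card_neighborFinset_eq_degree]

theorem SimpleGraph.mem_edgeSet_fromRel_eq_iff {V : Type*} (p : V → V) {e : Sym2 V} :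
    e ∈ (fromRel fun u v => p u = v).edgeSet ↔ ∃ u, p u ≠ u ∧ s(u, p u) = e := by
  induction e using Sym2.ind with
  | _ u v =>
    simp only [mem_edgeSet, fromRel_adj]
    constructor
    · rintro ⟨huv, rfl | rfl⟩
      · exact ⟨u, Ne.symm huv, rfl⟩
      · exact ⟨v, huv, Sym2.eq_swap⟩
    · rintro ⟨w, hw, hwuv⟩
      rcases Sym2.eq_iff.mp hwuv with ⟨rfl, rfl⟩ | ⟨rfl, rfl⟩
      · exact ⟨Ne.symm hw, Or.inl rfl⟩
      · exact ⟨hw, Or.inr rfl⟩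

namespace IsD2EdgeColoring

variable {V ι : Type*} {G : SimpleGraph V} {k : ℕ} {col : Sym2 V → Fin k}

theorem injective_comp (hcol : IsD2EdgeColoring G k col) {g : ι → Sym2 V}
    (hg : Pairwise fun a b => WithinDist2 G (g a) (g b)) : Function.Injective (col ∘ g) :=
  fun _ _ hab => by_contra fun hne => hcol _ _ (hg hne) hab

theorem exists_eq_of_pairwise [Fintype ι] (hcol : IsD2EdgeColoring G k col) {g : ι → Sym2 V}
    (hg : Pairwise fun a b => WithinDist2 G (g a) (g b)) (hk : Fintype.card ι = k)
    (e : Sym2 V) : ∃ a, ¬ WithinDist2 G e (g a) ∧ col e = col (g a) := by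
  have hbij : Function.Bijective (col ∘ g) :=
    (Fintype.bijective_iff_injective_and_card _).2 ⟨hcol.injective_comp hg, by simp [hk]⟩
  obtain ⟨a, ha⟩ := hbij.surjective (col e)
  exact ⟨a, fun h => hcol _ _ h ha.symm, ha.symm⟩

end IsD2EdgeColoring

theorem not_forall_eq_of_forall_exists_ne {ι α : Type*} [Nonempty ι] {x h : ι → α}
    (hh : Function.Injective h) (hx : ∀ i, ∃ j ≠ i, x i = h j) (a : α) :
    ¬ ∀ i, x i = a := by
  intro hall
  obtain ⟨j, -, hj⟩ := hx (Classical.arbitrary ι)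
  obtain ⟨k, hkj, hk⟩ := hx j
  exact hkj (hh (by rw [← hk, ← hj, hall, hall]))

namespace ClauseGadget

abbrev Vertex := Option (Fin 3 × Fin 5)

/-- `none` is the centre. On branch `i`, `some (i, 0)` is joined to the centre and to
`some (i, 1)` and `some (i, 2)`; `some (i, 1)` is joined to the input leaf `some (i, 3)` and
to `some (i, 4)`. -/
def parent : Vertex → Vertex
  | some (i, 1) | some (i, 2) => some (i, 0)
  | some (i, 3) | some (i, 4) => some (i, 1)
  | _ => none

def graph : SimpleGraph Vertex := SimpleGraph.fromRel fun u v => parent u = v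

instance : DecidableRel graph.Adj := by unfold graph; infer_instance

def parentEdge (c : Fin 3 × Fin 5) : Sym2 Vertex := s(some c, parent (some c))

theorem parentEdge_injective : Function.Injective parentEdge := by decide

theorem mem_edgeSet_iff {e : Sym2 Vertex} : e ∈ graph.edgeSet ↔ ∃ c, parentEdge c = e := by
  rw [graph, SimpleGraph.mem_edgeSet_fromRel_eq_iff]
  constructor
  · rintro ⟨u | c, hu, rfl⟩
    · exact absurd rfl hu
    · exact ⟨c, rfl⟩
  · rintro ⟨c, rfl⟩
    exact ⟨some c, by revert c; decide, rfl⟩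

def bipartition : Vertex → Fin 2
  | some (_, 0) | some (_, 3) | some (_, 4) => 1
  | _ => 0

theorem colorable_two : graph.Colorable 2 :=
  ⟨Coloring.mk bipartition fun {u v} => by revert u v; decide⟩

theorem degree_le_three : ∀ v, graph.degree v ≤ 3 := by decide

theorem degree_input_leaf : ∀ i, graph.degree (some (i, 3)) = 1 := by decide

set_option maxRecDepth 10000 in
theorem inputs_not_withinDist2 :
    ∀ i j, i ≠ j → ¬ WithinDist2 graph (parentEdge (i, 3)) (parentEdge (j, 3)) := by
  decide

def branchClique (i : Fin 3) : Fin 5 → Sym2 Vertex :=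
  ![parentEdge (0, 0), parentEdge (1, 0), parentEdge (2, 0),
    parentEdge (i, 1), parentEdge (i, 2)]

theorem branchClique_pairwise :
    ∀ i, Pairwise fun a b => WithinDist2 graph (branchClique i a) (branchClique i b) := by
  unfold Pairwise; decide

set_option maxRecDepth 10000 in
theorem eq_centre_of_not_withinDist2 :
    ∀ i a, ¬ WithinDist2 graph (parentEdge (i, 3)) (branchClique i a) →
      ∃ j ≠ i, branchClique i a = parentEdge (j, 0) := by
  decide

theorem centre_pairwise :
    Pairwise fun i j => WithinDist2 graph (parentEdge (i, 0)) (parentEdge (j, 0)) := by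
  unfold Pairwise; decide

theorem input_colour_eq_other_centre_colour {col : Sym2 Vertex → Fin 5}
    (hcol : IsD2EdgeColoring graph 5 col) :
    Function.Injective (fun i => col (parentEdge (i, 0))) ∧
      ∀ i, ∃ j ≠ i, col (parentEdge (i, 3)) = col (parentEdge (j, 0)) := by
  refine ⟨hcol.injective_comp centre_pairwise, fun i => ?_⟩
  obtain ⟨a, ha, hcolour⟩ := hcol.exists_eq_of_pairwise (branchClique_pairwise i)
    (Fintype.card_fin 5) (parentEdge (i, 3))
  obtain ⟨j, hji, hj⟩ := eq_centre_of_not_withinDist2 i a ha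
  exact ⟨j, hji, hj ▸ hcolour⟩

set_option maxRecDepth 10000 in
theorem exists_centre_colours : ∀ a b c : Fin 5, ¬ (a = b ∧ b = c) →
    ∃ h : Fin 3 → Fin 5, Function.Injective h ∧ ∀ i, ∃ j ≠ i, ![a, b, c] i = h j := by
  decide

def centreColour (i : Fin 3) : Fin 5 := i.castLE (by norm_num)

theorem centreColour_injective : Function.Injective centreColour :=
  Fin.castLE_injective (by norm_num)

def standardColour (x : Fin 3 → Fin 5) : Fin 3 × Fin 5 → Fin 5
  | (i, 0) => centreColour i
  | (_, 1) => 3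
  | (_, 2) => 4
  | (i, 3) => x i
  -- the centre colour of the third branch when `x i` is that of a second one
  | (i, 4) => 3 - centreColour i - x i

set_option maxRecDepth 10000 in
theorem standardColour_valid :
    ∀ x : Fin 3 → Fin 5, (∀ i, ∃ j ≠ i, x i = centreColour j) →
      ∀ c d, WithinDist2 graph (parentEdge c) (parentEdge d) →
        standardColour x c ≠ standardColour x d := by
  decide

theorem exists_colouring {x h : Fin 3 → Fin 5} (hh : Function.Injective h)
    (hx : ∀ i, ∃ j ≠ i, x i = h j) :
    ∃ col, IsD2EdgeColoring graph 5 col ∧ ∀ i, col (parentEdge (i, 3)) = x i := by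
  obtain ⟨σ, hσ⟩ := Equiv.Perm.exists_extending_pair _ _ centreColour_injective hh
  have hy : ∀ i, ∃ j ≠ i, σ.symm (x i) = centreColour j := fun i => by
    obtain ⟨j, hji, hj⟩ := hx i
    exact ⟨j, hji, by rw [hj, ← hσ, Equiv.symm_apply_apply]⟩
  refine ⟨Function.extend parentEdge (σ ∘ standardColour (σ.symm ∘ x)) 0, ?_, fun i => ?_⟩
  · rintro e f ⟨he, hf, hef⟩
    obtain ⟨c, rfl⟩ := mem_edgeSet_iff.mp he
    obtain ⟨d, rfl⟩ := mem_edgeSet_iff.mp hf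
    simp only [parentEdge_injective.extend_apply, Function.comp_apply]
    exact σ.injective.ne (standardColour_valid _ hy c d ⟨he, hf, hef⟩)
  · simp [parentEdge_injective.extend_apply, standardColour]

theorem input_leaf (i : Fin 3) :
    ∃ v, v ∈ parentEdge (i, 3) ∧ (graph.neighborSet v).ncard = 1 :=
  ⟨some (i, 3), Sym2.mem_mk_left _ _, by rw [ncard_neighborSet_eq_degree, degree_input_leaf]⟩

end ClauseGadget

/-- The clause gadget: a finite simple bipartite graph of maximum degree at most 3 with
three pairwise distinct designated input edges, each incident to a degree-1 vertex and
pairwise at distance greater than 2, such that an assignment of colors `a, b, c` (out of 5)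
to the inputs extends to a distance-2 edge coloring of the whole graph with 5 colors iff
`a, b, c` are not all equal. -/
theorem clause_gadget_exists :
    ∃ (V : Type) (_ : Fintype V) (G : SimpleGraph V) (e₁ e₂ e₃ : Sym2 V),
      G.Colorable 2 ∧
      (∀ v : V, (G.neighborSet v).ncard ≤ 3) ∧
      e₁ ∈ G.edgeSet ∧ e₂ ∈ G.edgeSet ∧ e₃ ∈ G.edgeSet ∧
      e₁ ≠ e₂ ∧ e₁ ≠ e₃ ∧ e₂ ≠ e₃ ∧
      (∃ v, v ∈ e₁ ∧ (G.neighborSet v).ncard = 1) ∧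
      (∃ v, v ∈ e₂ ∧ (G.neighborSet v).ncard = 1) ∧
      (∃ v, v ∈ e₃ ∧ (G.neighborSet v).ncard = 1) ∧
      ¬ WithinDist2 G e₁ e₂ ∧ ¬ WithinDist2 G e₁ e₃ ∧ ¬ WithinDist2 G e₂ e₃ ∧
      ∀ a b c : Fin 5,
        (∃ col : Sym2 V → Fin 5, IsD2EdgeColoring G 5 col ∧
            col e₁ = a ∧ col e₂ = b ∧ col e₃ = c) ↔ ¬ (a = b ∧ b = c) := by
  refine ⟨ClauseGadget.Vertex, inferInstance, ClauseGadget.graph, ClauseGadget.parentEdge (0, 3),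
    ClauseGadget.parentEdge (1, 3), ClauseGadget.parentEdge (2, 3), ClauseGadget.colorable_two,
    fun v => (ncard_neighborSet_eq_degree _ v).trans_le (ClauseGadget.degree_le_three v),
    ClauseGadget.mem_edgeSet_iff.mpr ⟨_, rfl⟩, ClauseGadget.mem_edgeSet_iff.mpr ⟨_, rfl⟩,
    ClauseGadget.mem_edgeSet_iff.mpr ⟨_, rfl⟩, by decide, by decide, by decide,
    ClauseGadget.input_leaf 0, ClauseGadget.input_leaf 1, ClauseGadget.input_leaf 2,
    ClauseGadget.inputs_not_withinDist2 0 1 (by decide),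
    ClauseGadget.inputs_not_withinDist2 0 2 (by decide),
    ClauseGadget.inputs_not_withinDist2 1 2 (by decide), fun a b c => ⟨?_, fun habc => ?_⟩⟩
  · rintro ⟨col, hcol, rfl, rfl, rfl⟩ ⟨hab, hbc⟩
    obtain ⟨hh, hx⟩ := ClauseGadget.input_colour_eq_other_centre_colour hcol
    refine not_forall_eq_of_forall_exists_ne hh hx (col (ClauseGadget.parentEdge (0, 3)))
      fun i => ?_
    fin_cases i <;> simp [hab, hbc]
  · obtain ⟨h, hh, hx⟩ := ClauseGadget.exists_centre_colours a b c habc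
    obtain ⟨col, hcol, hinput⟩ := ClauseGadget.exists_colouring hh hx
    exact ⟨col, hcol, hinput 0, hinput 1, hinput 2⟩
end
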